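/- Let n, k, h be natural numbers with 1 ≤ k and k + h < n. Let d : Fin n → ℝ be nondecreasing, let d̂ i ∈ ℝ and α i ≥ 0 satisfy |d̂ i − d i| ≤ α i. Set γ = (d k + d(k+1+h))/2 and define bad(i) by: if i ≤ k, bad(i) ↔ d̂ i > γ − 3·α i; if i ≥ k+1+h, bad(i) ↔ d̂ i < γ + 3·α i; otherwise bad(i) ↔ α i > (d(k+1+h) − d k)/4. Define the gap Δ i by: Δ i = d(k+1+h) − d i for i ≤ k; Δ i = d i − d k for i ≥ k+1+h; and Δ i = d(k+1+h) − d k otherwise. Then for any index i, if α i ≤ Δ i / 8, bad(i) does not occur. -/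
import Mathlib

/-- Fact 1 in the proof of Theorem 1 of "Adaptive Estimation for Approximate
k-Nearest-Neighbor Computations": on the good event, if the confidence
radius `α i` is at most one eighth of the gap `Δ i`, then item `i` is not
bad.  Indices are 0-based: the 1-indexed `d k` and `d (k+1+h)` become
`d ⟨k-1, _⟩` and `d ⟨k+h, _⟩`. -/
theorem adaptive_knn_fact1
    (n k h : ℕ) (hk : 1 ≤ k) (hkhn : k + h < n)
    (d dhat α : Fin n → ℝ)
    (hd : Monotone d)
    (hα : ∀ i, 0 ≤ α i)
    (hconc : ∀ i, |dhat i - d i| ≤ α i)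
    (γ : ℝ)
    (hγ : γ = (d ⟨k - 1, by omega⟩ + d ⟨k + h, hkhn⟩) / 2)
    (bad : Fin n → Prop)
    (hbad : ∀ i : Fin n, bad i ↔
      if (i : ℕ) < k then dhat i > γ - 3 * α i
      else if k + h ≤ (i : ℕ) then dhat i < γ + 3 * α i
      else α i > (d ⟨k + h, hkhn⟩ - d ⟨k - 1, by omega⟩) / 4)
    (Δ : Fin n → ℝ)
    (hΔ : ∀ i : Fin n, Δ i =
      if (i : ℕ) < k then d ⟨k + h, hkhn⟩ - d i
      else if k + h ≤ (i : ℕ) then d i - d ⟨k - 1, by omega⟩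
      else d ⟨k + h, hkhn⟩ - d ⟨k - 1, by omega⟩)
    (i : Fin n) (hi : α i ≤ Δ i / 8) :
    ¬ bad i := by
      have hci := abs_le.mp (hconc i)
      rw [hbad i]
      rw [hΔ i] at hi
      by_cases h1 : (i : ℕ) < k
      · simp only [h1, if_true] at hi ⊢
        have hle : d i ≤ d ⟨k - 1, by omega⟩ := hd (by simp [Fin.le_def]; omega)
        simp only [not_lt]
        linarith [hci.1, hci.2]
      · simp only [h1, if_false] at hi ⊢
        by_cases h2 : k + h ≤ (i : ℕ)
        · simp only [h2, if_true] at hi ⊢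
          have hle : d ⟨k + h, hkhn⟩ ≤ d i := hd (by simp [Fin.le_def]; omega)
          simp only [not_lt]
          linarith [hci.1, hci.2]
        · simp only [h2, if_false] at hi ⊢
          have hle : d ⟨k - 1, by omega⟩ ≤ d ⟨k + h, hkhn⟩ := hd (by simp [Fin.le_def]; omega)
          simp only [not_lt]
          linarith
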